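/- arXiv:math/0211372 — 3 statements merged into one kernel-verified Lean document; each statement's English description precedes it below -/
import Mathlib

section
/- Let f : (−∞, 0] → ℝ be differentiable with f(t) ≥ −K for all t (where K > 0) and f'(t) ≥ 3 f(t)² for all t. Then f(t) ≥ 0 for all t ∈ (−∞, 0]. -/
/-- If `f : (−∞,0] → ℝ` is differentiable, bounded below by `−K` (`K > 0`),
and satisfies `f' ≥ 3 f²` there, then `f ≥ 0` on `(−∞,0]`. -/
theorem stmt1 (f : ℝ → ℝ) (K : ℝ) (hK : 0 < K)
    (hdiff : ∀ t ≤ (0 : ℝ), DifferentiableAt ℝ f t)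
    (hbd : ∀ t ≤ (0 : ℝ), -K ≤ f t)
    (hode : ∀ t ≤ (0 : ℝ), 3 * (f t) ^ 2 ≤ deriv f t) :
    ∀ t ≤ (0 : ℝ), 0 ≤ f t := by
  intro t₀ ht₀
  by_contra hneg
  push_neg at hneg
  -- f is monotone on Iic 0
  have hconv : Convex ℝ (Set.Iic (0 : ℝ)) := convex_Iic 0
  have hcont : ContinuousOn f (Set.Iic (0 : ℝ)) := fun x hx =>
    ((hdiff x hx).continuousAt).continuousWithinAt
  have hdiffOn : DifferentiableOn ℝ f (interior (Set.Iic (0 : ℝ))) := fun x hx => by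
    rw [interior_Iic] at hx
    exact ((hdiff x hx.le).differentiableWithinAt)
  have hmono : MonotoneOn f (Set.Iic (0 : ℝ)) := by
    apply monotoneOn_of_deriv_nonneg hconv hcont hdiffOn
    intro x hx
    rw [interior_Iic] at hx
    have := hode x hx.le
    nlinarith [sq_nonneg (f x)]
  set c : ℝ := 3 * (f t₀) ^ 2 with hc
  have hcpos : 0 < c := by nlinarith
  -- on Iic t₀, deriv f ≥ c
  have hIic : Set.Iic t₀ ⊆ Set.Iic (0 : ℝ) := Set.Iic_subset_Iic.2 ht₀
  have hderge : ∀ x ∈ interior (Set.Iic t₀), c ≤ deriv f x := by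
    intro x hx
    rw [interior_Iic] at hx
    have hx0 : x ≤ 0 := hx.le.trans ht₀
    have hle : f x ≤ f t₀ := hmono (hIic (Set.mem_Iic.2 hx.le)) (Set.mem_Iic.2 ht₀) hx.le
    have : 3 * (f x) ^ 2 ≤ deriv f x := hode x hx0
    nlinarith
  set s : ℝ := t₀ - (K + 1) / c with hs
  have hdivpos : 0 < (K + 1) / c := by positivity
  have hst : s ≤ t₀ := by rw [hs]; linarith
  have hsub : interior (Set.Iic t₀) ⊆ interior (Set.Iic (0:ℝ)) := interior_mono hIic
  have key := (convex_Iic t₀).mul_sub_le_image_sub_of_le_deriv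
    (hcont.mono hIic) (hdiffOn.mono hsub)
    hderge s (Set.mem_Iic.2 hst) t₀ (Set.mem_Iic.2 le_rfl) hst
  have hcs : c * (t₀ - s) = K + 1 := by
    rw [hs, sub_sub_cancel]
    field_simp [hcpos.ne']
  rw [hcs] at key
  have hfb := hbd s (hst.trans ht₀)
  linarith
end

section
/- Let f : (−∞, 0] → ℝ be differentiable with f(t) ≥ −K for all t (where K > 0) and f'(t) ≥ f(t)² for all t. Then f(t) ≥ 0 for all t ∈ (−∞, 0]. -/
/-- If `f : (−∞,0] → ℝ` is differentiable, bounded below by `−K` (`K > 0`),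
and satisfies `f' ≥ f²` there, then `f ≥ 0` on `(−∞,0]`. -/
theorem stmt2 (f : ℝ → ℝ) (K : ℝ) (hK : 0 < K)
    (hdiff : ∀ t ≤ (0 : ℝ), DifferentiableAt ℝ f t)
    (hbd : ∀ t ≤ (0 : ℝ), -K ≤ f t)
    (hode : ∀ t ≤ (0 : ℝ), (f t) ^ 2 ≤ deriv f t) :
    ∀ t ≤ (0 : ℝ), 0 ≤ f t := by
  intro t₀ ht₀
  by_contra h
  push_neg at h
  set c : ℝ := -f t₀ with hc
  have hc0 : 0 < c := by simp only [hc]; linarith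
  have hc2 : (0:ℝ) < c ^ 2 := by positivity
  -- f is monotone on (-∞, 0]
  have hmono : MonotoneOn f (Set.Iic (0:ℝ)) := by
    apply monotoneOn_of_deriv_nonneg (convex_Iic 0)
    · exact fun t ht => (hdiff t ht).continuousAt.continuousWithinAt
    · rw [interior_Iic]
      exact fun t ht => ((hdiff t ht.le).differentiableWithinAt)
    · rw [interior_Iic]
      intro t ht
      exact le_trans (sq_nonneg (f t)) (hode t ht.le)
  set s : ℝ := t₀ - (K + c) / c ^ 2 with hs
  have hst : s ≤ t₀ := by
    have : 0 < (K + c) / c ^ 2 := by positivity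
    simp only [hs]; linarith
  have hs0 : s ≤ 0 := le_trans hst ht₀
  -- g t = f t - c^2 * t is monotone on [s, t₀]
  set g : ℝ → ℝ := fun t => f t - c ^ 2 * t with hg
  have hgmono : MonotoneOn g (Set.Icc s t₀) := by
    apply monotoneOn_of_deriv_nonneg (convex_Icc s t₀)
    · intro t ht
      exact (((hdiff t (le_trans ht.2 ht₀)).sub
        ((differentiable_id.const_mul (c ^ 2)) t)).continuousAt).continuousWithinAt
    · rw [interior_Icc]
      intro t ht
      exact ((hdiff t (le_trans ht.2.le ht₀)).sub
        ((differentiable_id.const_mul (c ^ 2)) t)).differentiableWithinAt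
    · rw [interior_Icc]
      intro t ht
      have ht0 : t ≤ 0 := le_trans ht.2.le ht₀
      have hder : HasDerivAt g (deriv f t - c ^ 2) t := by
        have h1 := (hdiff t ht0).hasDerivAt
        have h2 : HasDerivAt (fun x : ℝ => c ^ 2 * x) (c ^ 2) t := by
          simpa using (hasDerivAt_id t).const_mul (c ^ 2)
        exact h1.sub h2
      rw [hder.deriv]
      -- f t ≤ f t₀ = -c, so (f t)^2 ≥ c^2
      have hft : f t ≤ -c := by
        have := hmono (Set.mem_Iic.mpr ht0) (Set.mem_Iic.mpr ht₀) ht.2.le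
        simpa [hc] using this
      have hsq : c ^ 2 ≤ (f t) ^ 2 := by
        have : c ≤ -f t := by linarith
        calc c ^ 2 ≤ (-f t) ^ 2 := pow_le_pow_left₀ hc0.le this 2
          _ = (f t) ^ 2 := by ring
      have := hode t ht0
      linarith
  have hgs : g s ≤ g t₀ :=
    hgmono (Set.mem_Icc.mpr ⟨le_refl s, hst⟩) (Set.mem_Icc.mpr ⟨hst, le_refl t₀⟩) hst
  -- unfold: f s - c^2 s ≤ f t₀ - c^2 t₀
  have hkey : f s ≤ f t₀ - c ^ 2 * (t₀ - s) := by
    simp only [hg] at hgs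
    linarith
  have hcs : c ^ 2 * (t₀ - s) = K + c := by
    simp only [hs]
    field_simp
    ring
  have : f s ≤ -c - (K + c) := by
    rw [hcs] at hkey
    simp only [hc] at hkey ⊢
    linarith
  have := hbd s hs0
  linarith
end

section
/- Let (M,g) be a complete Riemannian manifold of dimension n with nonnegative Ricci curvature, x₀ ∈ M, and let R : M → ℝ be a nonnegative measurable function. Define M(r) = sup_{a ≥ r} (1/Vol(B(x₀,a))) ∫_{B(x₀,a)} R dV. Then for every r > 0, ∫_M R(x) e^{−(1 + d(x,x₀)/r)} dV(x) ≤ C · M(r) · Vol(B(x₀,r)), where C depends only on n. -/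
open MeasureTheory Metric

lemma pow_le_factorial_mul_exp (x : ℝ) (hx : 0 ≤ x) (n : ℕ) :
    x ^ n ≤ (Nat.factorial n : ℝ) * Real.exp x := by
  have h := Real.sum_le_exp_of_nonneg hx (n + 1)
  have h2 : x ^ n / (Nat.factorial n : ℝ) ≤ ∑ i ∈ Finset.range (n + 1), x ^ i / (Nat.factorial i : ℝ) := by
    refine Finset.single_le_sum (f := fun i => x ^ i / (Nat.factorial i : ℝ)) (fun i _ => ?_)
      (Finset.self_mem_range_succ n)
    have : (0:ℝ) < (Nat.factorial i : ℝ) := by exact_mod_cast i.factorial_pos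
    positivity
  have h3 : x ^ n / (Nat.factorial n : ℝ) ≤ Real.exp x := le_trans h2 h
  have hn : (0:ℝ) < (Nat.factorial n : ℝ) := by exact_mod_cast n.factorial_pos
  rw [div_le_iff₀ hn] at h3
  linarith

/-- There is a constant `C = C(n)` such that on any metric measure space
satisfying the Bishop–Gromov volume comparison at `x₀` (the consequence of nonnegative
Ricci curvature in dimension `n` used here), for any nonnegative measurable `R` with
averages over balls `B(x₀,a)`, `a ≥ r`, bounded by `M(r)`, one has
`∫_M R(x) e^{−(1 + d(x,x₀)/r)} dV ≤ C · M(r) · Vol(B(x₀,r))`. -/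
theorem stmt6 (n : ℕ) :
    ∃ C : ℝ, 0 < C ∧
      ∀ (M : Type) [MetricSpace M] [MeasurableSpace M] [BorelSpace M]
        (μ : Measure M) (x₀ : M) (R : M → ℝ),
        Measurable R → (∀ x, 0 ≤ R x) →
        (∀ (x : M) (r : ℝ), μ (ball x r) < ⊤) →
        (∀ r s : ℝ, 0 < r → r ≤ s →
          (μ (ball x₀ s)).toReal ≤ (s / r) ^ n * (μ (ball x₀ r)).toReal) →
        ∀ r : ℝ, 0 < r → ∀ Mr : ℝ,
          (∀ a : ℝ, r ≤ a →
            ∫ x in ball x₀ a, R x ∂μ ≤ Mr * (μ (ball x₀ a)).toReal) →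
          ∫ x, R x * Real.exp (-(1 + dist x x₀ / r)) ∂μ
            ≤ C * Mr * (μ (ball x₀ r)).toReal := by
  have hCpos : (0:ℝ) < 2 ^ (n+1) * (Nat.factorial n : ℝ) := by
    have : (0:ℝ) < (Nat.factorial n : ℝ) := by exact_mod_cast n.factorial_pos
    positivity
  refine ⟨2 ^ (n+1) * (Nat.factorial n : ℝ), hCpos, ?_⟩
  intro M _ _ _ μ x₀ R hRm hR0 hfin hBG r hr Mr hMr
  set V : ℝ := (μ (ball x₀ r)).toReal with hVdef
  set g : M → ℝ := fun x => R x * Real.exp (-(1 + dist x x₀ / r)) with hgdef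
  have hg0 : ∀ x, 0 ≤ g x := fun x => mul_nonneg (hR0 x) (Real.exp_pos _).le
  by_cases hV0 : V = 0
  · -- degenerate case: the space has measure zero
    have hball0 : ∀ s : ℝ, μ (ball x₀ s) = 0 := by
      intro s
      have hr0 : μ (ball x₀ r) = 0 := by
        rcases (ENNReal.toReal_eq_zero_iff _).mp hV0 with h | h
        · exact h
        · exact absurd h (hfin x₀ r).ne
      rcases le_total s r with h | h
      · exact le_antisymm ((measure_mono (ball_subset_ball h)).trans_eq hr0) zero_le
      · have h1 := hBG r s hr h
        rw [← hVdef, hV0] at h1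
        have h2 : (μ (ball x₀ s)).toReal = 0 := le_antisymm (by simpa using h1) ENNReal.toReal_nonneg
        rcases (ENNReal.toReal_eq_zero_iff _).mp h2 with h | h
        · exact h
        · exact absurd h (hfin x₀ s).ne
    have huniv : μ Set.univ = 0 := by
      have he : (Set.univ : Set M) = ⋃ k : ℕ, ball x₀ k := by
        ext x
        simp only [Set.mem_univ, Set.mem_iUnion, mem_ball, true_iff]
        obtain ⟨k, hk⟩ := exists_nat_gt (dist x x₀)
        exact ⟨k, hk⟩
      rw [he]
      exact measure_iUnion_null fun k => hball0 k
    have : μ = 0 := Measure.measure_univ_eq_zero.mp huniv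
    rw [this, hV0]
    simp
  · have hVpos : 0 < V := lt_of_le_of_ne ENNReal.toReal_nonneg (Ne.symm hV0)
    have hMr0 : 0 ≤ Mr := by
      have h1 := hMr r le_rfl
      have h2 : 0 ≤ ∫ x in ball x₀ r, R x ∂μ := integral_nonneg fun x => hR0 x
      nlinarith
    by_cases hint : Integrable g μ
    · -- main case
      set S : ℕ → Set M := fun k => ball x₀ (((k:ℝ)+1)*r) \ ball x₀ ((k:ℝ)*r) with hSdef
      have hSm : ∀ k, MeasurableSet (S k) := fun k =>
        measurableSet_ball.diff measurableSet_ball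
      have hSaux : ∀ k l : ℕ, k < l → Disjoint (S k) (S l) := by
        intro k l h
        refine Set.disjoint_left.mpr fun x hx hx' => ?_
        refine hx'.2 (ball_subset_ball ?_ hx.1)
        have : ((k:ℝ)+1) ≤ (l:ℝ) := by exact_mod_cast h
        nlinarith
      have hSd : Pairwise (Function.onFun Disjoint S) := by
        intro k l hkl
        rcases hkl.lt_or_gt with h | h
        · exact hSaux k l h
        · exact (hSaux l k h).symm
      have hSu : (⋃ k, S k) = Set.univ := by
        ext x
        simp only [Set.mem_iUnion, Set.mem_univ, iff_true, hSdef, Set.mem_diff, mem_ball]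
        have hd0 : 0 ≤ dist x x₀ / r := div_nonneg dist_nonneg hr.le
        refine ⟨⌊dist x x₀ / r⌋₊, ?_, ?_⟩
        · have := Nat.lt_floor_add_one (dist x x₀ / r)
          calc dist x x₀ = (dist x x₀ / r) * r := by field_simp
            _ < ((⌊dist x x₀ / r⌋₊ : ℝ) + 1) * r := by
                exact mul_lt_mul_of_pos_right this hr
        · have h1 := Nat.floor_le hd0
          intro hc
          have : dist x x₀ / r < (⌊dist x x₀ / r⌋₊ : ℝ) := by
            rw [div_lt_iff₀ hr]
            linarith [hc]
          linarith
      have hRball : ∀ a : ℝ, IntegrableOn R (ball x₀ a) μ := by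
        intro a
        have hgon : IntegrableOn g (ball x₀ a) μ := hint.integrableOn
        refine Integrable.mono (hgon.const_mul (Real.exp (1 + a/r)))
          hRm.aestronglyMeasurable.restrict ?_
        refine (ae_restrict_iff' measurableSet_ball).mpr
          (Filter.Eventually.of_forall fun x hx => ?_)
        have hda : dist x x₀ < a := mem_ball.mp hx
        have hexp : Real.exp (1 + a/r) * g x = R x * Real.exp (a/r - dist x x₀ / r) := by
          simp only [hgdef]
          rw [mul_left_comm, ← Real.exp_add]
          congr 2
          ring
        have hge : R x ≤ Real.exp (1 + a/r) * g x := by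
          rw [hexp]
          calc R x = R x * Real.exp 0 := by rw [Real.exp_zero, mul_one]
            _ ≤ R x * Real.exp (a/r - dist x x₀ / r) := by
                refine mul_le_mul_of_nonneg_left (Real.exp_le_exp.mpr ?_) (hR0 x)
                have : dist x x₀ / r ≤ a / r := by gcongr
                linarith
        rw [Real.norm_eq_abs, Real.norm_eq_abs, abs_of_nonneg (hR0 x),
          abs_of_nonneg (mul_nonneg (Real.exp_pos _).le (hg0 x))]
        exact hge
      -- per-annulus bound
      have key : ∀ k : ℕ, ∫ x in S k, g x ∂μ
          ≤ Mr * V * (((k:ℝ)+1)^n * Real.exp (-(1+(k:ℝ)))) := by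
        intro k
        have hsub : S k ⊆ ball x₀ (((k:ℝ)+1)*r) := Set.diff_subset
        have hRSk : IntegrableOn (fun x => R x * Real.exp (-(1+(k:ℝ)))) (S k) μ :=
          ((hRball _).mono_set hsub).mul_const _
        have h1 : ∫ x in S k, g x ∂μ ≤ ∫ x in S k, R x * Real.exp (-(1+(k:ℝ))) ∂μ := by
          refine setIntegral_mono_on hint.integrableOn hRSk (hSm k) fun x hx => ?_
          have hk : (k:ℝ)*r ≤ dist x x₀ := not_lt.mp fun h => hx.2 (mem_ball.mpr h)
          refine mul_le_mul_of_nonneg_left (Real.exp_le_exp.mpr ?_) (hR0 x)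
          have : (k:ℝ) ≤ dist x x₀ / r := (le_div_iff₀ hr).mpr hk
          linarith
        have h2 : ∫ x in S k, R x * Real.exp (-(1+(k:ℝ))) ∂μ
            = (∫ x in S k, R x ∂μ) * Real.exp (-(1+(k:ℝ))) := integral_mul_const _ _
        have h3 : ∫ x in S k, R x ∂μ ≤ ∫ x in ball x₀ (((k:ℝ)+1)*r), R x ∂μ :=
          setIntegral_mono_set (hRball _) (Filter.Eventually.of_forall hR0)
            (HasSubset.Subset.eventuallyLE hsub)
        have hra : r ≤ ((k:ℝ)+1)*r := by nlinarith [(Nat.cast_nonneg k : (0:ℝ) ≤ (k:ℝ))]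
        have h4 : ∫ x in ball x₀ (((k:ℝ)+1)*r), R x ∂μ
            ≤ Mr * (μ (ball x₀ (((k:ℝ)+1)*r))).toReal := hMr _ hra
        have h5 : (μ (ball x₀ (((k:ℝ)+1)*r))).toReal ≤ ((k:ℝ)+1)^n * V := by
          have hb := hBG r (((k:ℝ)+1)*r) hr hra
          rwa [mul_div_assoc, div_self hr.ne', mul_one] at hb
        have hepos : (0:ℝ) ≤ Real.exp (-(1+(k:ℝ))) := (Real.exp_pos _).le
        calc ∫ x in S k, g x ∂μ
            ≤ (∫ x in S k, R x ∂μ) * Real.exp (-(1+(k:ℝ))) := h2 ▸ h1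
          _ ≤ (∫ x in ball x₀ (((k:ℝ)+1)*r), R x ∂μ) * Real.exp (-(1+(k:ℝ))) :=
              mul_le_mul_of_nonneg_right h3 hepos
          _ ≤ (Mr * (μ (ball x₀ (((k:ℝ)+1)*r))).toReal) * Real.exp (-(1+(k:ℝ))) :=
              mul_le_mul_of_nonneg_right h4 hepos
          _ ≤ (Mr * (((k:ℝ)+1)^n * V)) * Real.exp (-(1+(k:ℝ))) :=
              mul_le_mul_of_nonneg_right (mul_le_mul_of_nonneg_left h5 hMr0) hepos
          _ = Mr * V * (((k:ℝ)+1)^n * Real.exp (-(1+(k:ℝ)))) := by ring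
      -- the series bound
      set x : ℝ := Real.exp (-(1/2 : ℝ)) with hxdef
      have hx0 : 0 < x := Real.exp_pos _
      have hxlt : x < 1 := Real.exp_lt_one_iff.mpr (by norm_num)
      have hx23 : x ≤ 2/3 := by
        have h32 : (3/2:ℝ) ≤ Real.exp (1/2) := by
          have := Real.add_one_le_exp (1/2 : ℝ); linarith
        have : x = (Real.exp (1/2))⁻¹ := by rw [hxdef, Real.exp_neg]
        rw [this]
        rw [inv_le_comm₀ (by positivity) (by norm_num)]
        linarith
      set c : ℝ := 2 ^ n * (Nat.factorial n : ℝ) with hcdef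
      have hc0 : 0 < c := by
        have : (0:ℝ) < (Nat.factorial n : ℝ) := by exact_mod_cast n.factorial_pos
        positivity
      have hterm : ∀ k : ℕ, ((k:ℝ)+1)^n * Real.exp (-(1+(k:ℝ))) ≤ (c * x) * x ^ k := by
        intro k
        have hy : (0:ℝ) < (k:ℝ)+1 := by positivity
        have h1 : (((k:ℝ)+1)/2)^n ≤ (Nat.factorial n : ℝ) * Real.exp (((k:ℝ)+1)/2) :=
          pow_le_factorial_mul_exp _ (by positivity) n
        have h2 : ((k:ℝ)+1)^n ≤ c * Real.exp (((k:ℝ)+1)/2) := by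
          have he : ((k:ℝ)+1)^n = 2^n * (((k:ℝ)+1)/2)^n := by
            rw [← mul_pow]; congr 1; ring
          rw [he, hcdef, mul_assoc]
          exact mul_le_mul_of_nonneg_left h1 (by positivity)
        have h3 : (c * x) * x ^ k = c * Real.exp (-(((k:ℝ)+1)/2)) := by
          rw [hxdef, mul_assoc, ← pow_succ', ← Real.exp_nat_mul]
          congr 2
          push_cast
          ring
        rw [h3]
        calc ((k:ℝ)+1)^n * Real.exp (-(1+(k:ℝ)))
            ≤ (c * Real.exp (((k:ℝ)+1)/2)) * Real.exp (-(1+(k:ℝ))) :=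
              mul_le_mul_of_nonneg_right h2 (Real.exp_pos _).le
          _ = c * (Real.exp (((k:ℝ)+1)/2) * Real.exp (-(1+(k:ℝ)))) := by ring
          _ = c * Real.exp (-(((k:ℝ)+1)/2)) := by
              rw [← Real.exp_add]; congr 2; ring
      have hbs : Summable (fun k : ℕ => (Mr * V * (c * x)) * x ^ k) :=
        (summable_geometric_of_lt_one hx0.le hxlt).mul_left _
      have hkey2 : ∀ k : ℕ, ∫ x' in S k, g x' ∂μ ≤ (Mr * V * (c * x)) * x ^ k := by
        intro k
        refine (key k).trans ?_
        have := hterm k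
        have hMrV : 0 ≤ Mr * V := mul_nonneg hMr0 hVpos.le
        calc Mr * V * (((k:ℝ)+1)^n * Real.exp (-(1+(k:ℝ))))
            ≤ Mr * V * ((c * x) * x ^ k) := mul_le_mul_of_nonneg_left this hMrV
          _ = (Mr * V * (c * x)) * x ^ k := by ring
      have hfs : Summable (fun k : ℕ => ∫ x' in S k, g x' ∂μ) :=
        Summable.of_nonneg_of_le (fun k => integral_nonneg fun x' => hg0 x') hkey2 hbs
      have hdecomp : ∫ x', g x' ∂μ = ∑' k, ∫ x' in S k, g x' ∂μ := by
        rw [← setIntegral_univ, ← hSu]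
        exact integral_iUnion hSm hSd ((integrableOn_univ.mpr hint).mono_set (Set.subset_univ _))
      have htsum : ∑' k, ∫ x' in S k, g x' ∂μ ≤ (Mr * V * (c * x)) * (1 - x)⁻¹ := by
        have := Summable.tsum_le_tsum hkey2 hfs hbs
        rwa [tsum_mul_left, tsum_geometric_of_lt_one hx0.le hxlt] at this
      have hgeo : (c * x) * (1 - x)⁻¹ ≤ 2 * c := by
        have hu0 : 0 < (1 - x)⁻¹ := inv_pos.mpr (by linarith)
        have hu1 : (1 - x) * (1 - x)⁻¹ = 1 := mul_inv_cancel₀ (by linarith)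
        have hu3 : (1 - x)⁻¹ ≤ 3 := by
          nlinarith
        nlinarith
      have hfinal : (Mr * V * (c * x)) * (1 - x)⁻¹ ≤ 2 ^ (n+1) * (Nat.factorial n : ℝ) * Mr * V := by
        have hMrV : 0 ≤ Mr * V := mul_nonneg hMr0 hVpos.le
        have : Mr * V * ((c * x) * (1 - x)⁻¹) ≤ Mr * V * (2 * c) :=
          mul_le_mul_of_nonneg_left hgeo hMrV
        calc (Mr * V * (c * x)) * (1 - x)⁻¹ = Mr * V * ((c * x) * (1 - x)⁻¹) := by ring
          _ ≤ Mr * V * (2 * c) := this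
          _ = 2 ^ (n+1) * (Nat.factorial n : ℝ) * Mr * V := by rw [hcdef]; ring
      calc ∫ x', g x' ∂μ = ∑' k, ∫ x' in S k, g x' ∂μ := hdecomp
        _ ≤ (Mr * V * (c * x)) * (1 - x)⁻¹ := htsum
        _ ≤ 2 ^ (n+1) * (Nat.factorial n : ℝ) * Mr * V := hfinal
    · -- non-integrable case: the Bochner integral is zero
      rw [integral_undef hint]
      have : (0:ℝ) ≤ 2 ^ (n+1) * (Nat.factorial n : ℝ) * Mr := mul_nonneg hCpos.le hMr0
      exact mul_nonneg this hVpos.le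
end
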